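/- Let z be a standard Gaussian random vector in R^p with p ≥ 2 and let Σ be a p×p positive semi-definite matrix. Then E[(zᵀ Σ z)²/(zᵀ z)²] ≤ tr(Σ²)/p + (tr Σ)²/(p(p−1)). -/

import Mathlib

open MeasureTheory ProbabilityTheory Matrix

/-- The standard Gaussian measure on `ℝ^p` (i.i.d. `N(0,1)` coordinates). -/
noncomputable def stdGaussian (p : ℕ) : Measure (Fin p → ℝ) :=
  Measure.pi fun _ => gaussianReal 0 1

/-!
By Cauchy–Schwarz, `(xᵀ S x)² ≤ ‖x‖² ‖S x‖²`, so for symmetric `S` the ratio is dominated by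
`xᵀ S² x / ‖x‖²`. For i.i.d. coordinates with a sign-symmetric law without atoms,
`E[xᵢ xⱼ / ‖x‖²] = δᵢⱼ / p`: flipping the sign of `xᵢ` kills the off-diagonal terms, swapping
coordinates makes the diagonal terms equal, and they sum to `1`. Hence the expectation is at most
`tr(S²) / p`, and the second term of the bound is nonnegative.
-/

open scoped NNReal

theorem integral_eq_zero_of_comp_eq_neg {α : Type*} [MeasurableSpace α] {ν : Measure α}
    {T : α → α} (hT : MeasurePreserving T ν ν) {g : α → ℝ} (hg : AEStronglyMeasurable g ν)
    (hodd : ∀ x, g (T x) = -g x) : ∫ x, g x ∂ν = 0 := by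
  have h := integral_map hT.aemeasurable (hT.map_eq ▸ hg)
  rw [hT.map_eq] at h
  simp only [hodd, integral_neg] at h
  exact self_eq_neg.mp h

instance isNegInvariant_gaussianReal_zero (v : ℝ≥0) : (gaussianReal 0 v).IsNegInvariant :=
  ⟨by simpa [Measure.neg_def] using gaussianReal_map_neg (μ := 0) (v := v)⟩

section RatioMoments

variable {ι : Type*} [Fintype ι]

theorem dotProduct_self_nonneg (x : ι → ℝ) : 0 ≤ x ⬝ᵥ x :=
  Finset.sum_nonneg fun k _ => mul_self_nonneg (x k)

theorem mul_self_le_dotProduct_self (x : ι → ℝ) (i : ι) : x i * x i ≤ x ⬝ᵥ x :=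
  Finset.single_le_sum (f := fun k => x k * x k) (fun k _ => mul_self_nonneg (x k))
    (Finset.mem_univ i)

theorem abs_mul_div_dotProduct_self_le_one (x : ι → ℝ) (i j : ι) :
    |x i * x j / (x ⬝ᵥ x)| ≤ 1 := by
  rcases (dotProduct_self_nonneg x).eq_or_lt with hx | hx
  · simp [← hx]
  rw [abs_div, abs_of_pos hx, div_le_one hx]
  refine abs_le_of_sq_le_sq ?_ hx.le
  calc (x i * x j) ^ 2 = (x i * x i) * (x j * x j) := by ring
    _ ≤ (x ⬝ᵥ x) * (x ⬝ᵥ x) := mul_le_mul (mul_self_le_dotProduct_self x i)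
        (mul_self_le_dotProduct_self x j) (mul_self_nonneg _) hx.le
    _ = (x ⬝ᵥ x) ^ 2 := (sq _).symm

theorem measurable_mul_div_dotProduct_self (i j : ι) :
    Measurable fun x : ι → ℝ => x i * x j / (x ⬝ᵥ x) := by
  unfold dotProduct; fun_prop

theorem integrable_mul_div_dotProduct_self (ν : Measure (ι → ℝ)) [IsFiniteMeasure ν] (i j : ι) :
    Integrable (fun x => x i * x j / (x ⬝ᵥ x)) ν :=
  .of_bound (measurable_mul_div_dotProduct_self i j).aestronglyMeasurable 1
    (ae_of_all _ fun x => abs_mul_div_dotProduct_self_le_one x i j)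

theorem dotProduct_mulVec_div_dotProduct_self (A : Matrix ι ι ℝ) (x : ι → ℝ) :
    x ⬝ᵥ (A *ᵥ x) / (x ⬝ᵥ x) = ∑ i, ∑ j, A i j * (x i * x j / (x ⬝ᵥ x)) := by
  simp only [dotProduct, mulVec, Finset.mul_sum, Finset.sum_div, mul_div_assoc]
  exact Finset.sum_congr rfl fun i _ => Finset.sum_congr rfl fun j _ => by ring

theorem integrable_dotProduct_mulVec_div_dotProduct_self (ν : Measure (ι → ℝ))
    [IsFiniteMeasure ν] (A : Matrix ι ι ℝ) :
    Integrable (fun x => x ⬝ᵥ (A *ᵥ x) / (x ⬝ᵥ x)) ν := by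
  simp only [dotProduct_mulVec_div_dotProduct_self A]
  exact integrable_finsetSum _ fun i _ => integrable_finsetSum _ fun j _ =>
    (integrable_mul_div_dotProduct_self ν i j).const_mul _

theorem dotProduct_mulVec_sq_le (S : Matrix ι ι ℝ) (x : ι → ℝ) :
    (x ⬝ᵥ (S *ᵥ x)) ^ 2 ≤ (x ⬝ᵥ x) * (x ⬝ᵥ ((Sᵀ * S) *ᵥ x)) := by
  rw [← mulVec_mulVec, dotProduct_mulVec x Sᵀ, vecMul_transpose]
  simpa only [dotProduct, sq] using Finset.sum_mul_sq_le_sq_mul_sq Finset.univ x (S *ᵥ x)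

theorem sq_dotProduct_mulVec_div_sq_le (S : Matrix ι ι ℝ) (x : ι → ℝ) :
    (x ⬝ᵥ (S *ᵥ x)) ^ 2 / (x ⬝ᵥ x) ^ 2 ≤ x ⬝ᵥ ((Sᵀ * S) *ᵥ x) / (x ⬝ᵥ x) := by
  rcases (dotProduct_self_nonneg x).eq_or_lt with hx | hx
  · simp [← hx]
  rw [div_le_div_iff₀ (by positivity) hx]
  nlinarith [dotProduct_mulVec_sq_le S x]

variable (μ : Measure ℝ)

theorem integral_mul_div_dotProduct_self_of_ne [SigmaFinite μ] [μ.IsNegInvariant] {i j : ι}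
    (hij : i ≠ j) :
    ∫ x, x i * x j / (x ⬝ᵥ x) ∂Measure.pi (fun _ : ι => μ) = 0 := by
  classical
  let flip : (ι → ℝ) → ι → ℝ := fun x k => (if k = i then Neg.neg else id) (x k)
  have hflip : MeasurePreserving flip (Measure.pi fun _ => μ) (Measure.pi fun _ => μ) :=
    measurePreserving_pi _ _ fun k => by
      split_ifs
      · exact Measure.measurePreserving_neg μ
      · exact .id μ
  refine integral_eq_zero_of_comp_eq_neg hflip
    (measurable_mul_div_dotProduct_self i j).aestronglyMeasurable fun x => ?_
  have hdot : flip x ⬝ᵥ flip x = x ⬝ᵥ x :=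
    Finset.sum_congr rfl fun k _ => by by_cases hk : k = i <;> simp [flip, hk]
  simp [flip, hdot, hij.symm, neg_div]

theorem integral_mul_self_div_dotProduct_self_swap [SigmaFinite μ] (i j : ι) :
    ∫ x, x i * x i / (x ⬝ᵥ x) ∂Measure.pi (fun _ : ι => μ)
      = ∫ x, x j * x j / (x ⬝ᵥ x) ∂Measure.pi (fun _ : ι => μ) := by
  classical
  let swap := MeasurableEquiv.arrowCongr' (Equiv.swap i j) (MeasurableEquiv.refl ℝ)
  have hswap : MeasurePreserving swap (Measure.pi fun _ : ι => μ) (Measure.pi fun _ => μ) :=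
    measurePreserving_arrowCongr' _ _ _ _ fun _ => .id μ
  rw [← hswap.integral_comp']
  congr 1 with x
  have hdot : swap x ⬝ᵥ swap x = x ⬝ᵥ x := comp_equiv_dotProduct_comp_equiv _ _ _
  have hi : swap x i = x j := by simp [swap, MeasurableEquiv.arrowCongr', Equiv.arrowCongr']
  rw [hdot, hi]

theorem ae_dotProduct_self_ne_zero [SigmaFinite μ] [NullSingletonClass μ] [Nonempty ι] :
    ∀ᵐ x ∂Measure.pi (fun _ : ι => μ), x ⬝ᵥ x ≠ 0 := by
  refine ae_iff.mpr ?_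
  simp only [ne_eq, not_not, dotProduct_self_eq_zero, Set.ofPred_eq_eq_singleton]
  exact measure_singleton 0

theorem integral_mul_self_div_dotProduct_self [IsProbabilityMeasure μ] [NullSingletonClass μ]
    (i : ι) :
    ∫ x, x i * x i / (x ⬝ᵥ x) ∂Measure.pi (fun _ : ι => μ) = 1 / Fintype.card ι := by
  have : Nonempty ι := ⟨i⟩
  have hsum : ∑ j : ι, ∫ x, x j * x j / (x ⬝ᵥ x) ∂Measure.pi (fun _ : ι => μ) = 1 := by
    rw [← integral_finsetSum _ fun j _ => integrable_mul_div_dotProduct_self _ j j]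
    have hone :
        (fun x : ι → ℝ => ∑ j, x j * x j / (x ⬝ᵥ x)) =ᵐ[Measure.pi fun _ => μ] fun _ => 1 :=
      (ae_dotProduct_self_ne_zero μ).mono fun x hx => by
        simp only [← Finset.sum_div]; exact div_self hx
    simp [integral_congr_ae hone]
  simp only [← integral_mul_self_div_dotProduct_self_swap μ i, Finset.sum_const,
    Finset.card_univ, nsmul_eq_mul] at hsum
  rw [eq_div_iff (by positivity)]
  linarith

theorem integral_dotProduct_mulVec_div_dotProduct_self [IsProbabilityMeasure μ] [μ.IsNegInvariant]
    [NullSingletonClass μ] (A : Matrix ι ι ℝ) :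
    ∫ x, x ⬝ᵥ (A *ᵥ x) / (x ⬝ᵥ x) ∂Measure.pi (fun _ : ι => μ) = A.trace / Fintype.card ι := by
  let ν := Measure.pi fun _ : ι => μ
  have hint (i j : ι) : Integrable (fun x => A i j * (x i * x j / (x ⬝ᵥ x))) ν :=
    (integrable_mul_div_dotProduct_self ν i j).const_mul _
  have hrow (i : ι) :
      ∫ x, ∑ j, A i j * (x i * x j / (x ⬝ᵥ x)) ∂ν = A i i / Fintype.card ι := by
    rw [integral_finsetSum _ fun j _ => hint i j]
    simp only [integral_const_mul]
    rw [Finset.sum_eq_single i (fun j _ hji => by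
        rw [integral_mul_div_dotProduct_self_of_ne μ hji.symm, mul_zero]) (by simp),
      integral_mul_self_div_dotProduct_self, mul_one_div]
  simp only [dotProduct_mulVec_div_dotProduct_self A]
  rw [integral_finsetSum _ fun i _ => integrable_finsetSum _ fun j _ => hint i j]
  simp only [hrow, trace, diag_apply, Finset.sum_div]

theorem integral_sq_dotProduct_mulVec_div_sq_le [IsProbabilityMeasure μ] [μ.IsNegInvariant]
    [NullSingletonClass μ] (S : Matrix ι ι ℝ) :
    ∫ x, (x ⬝ᵥ (S *ᵥ x)) ^ 2 / (x ⬝ᵥ x) ^ 2 ∂Measure.pi (fun _ : ι => μ)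
      ≤ (Sᵀ * S).trace / Fintype.card ι := by
  rw [← integral_dotProduct_mulVec_div_dotProduct_self μ]
  exact integral_mono_of_nonneg (ae_of_all _ fun x => by positivity)
    (integrable_dotProduct_mulVec_div_dotProduct_self _ _)
    (ae_of_all _ (sq_dotProduct_mulVec_div_sq_le S))

end RatioMoments

theorem gaussian_quadratic_ratio_sq_mean_general {p : ℕ}
    (S : Matrix (Fin p) (Fin p) ℝ) (hS : S.PosSemidef) :
    ∫ x, (x ⬝ᵥ (S *ᵥ x)) ^ 2 / (x ⬝ᵥ x) ^ 2 ∂(stdGaussian p)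
      ≤ (S * S).trace / p + S.trace ^ 2 / ((p : ℝ) * ((p : ℝ) - 1)) := by
  have := nullSingletonClass_gaussianReal (μ := 0) (v := 1) one_ne_zero
  have hSt : Sᵀ = S := by
    simpa [conjTranspose_eq_transpose_of_trivial] using hS.isHermitian.eq
  have hdenom : 0 ≤ (p : ℝ) * ((p : ℝ) - 1) := by
    rcases p with _ | n
    · simp
    · push_cast; nlinarith
  calc _ ≤ (Sᵀ * S).trace / p :=
        (integral_sq_dotProduct_mulVec_div_sq_le (gaussianReal 0 1) S).trans_eq
          (by rw [Fintype.card_fin])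
    _ ≤ _ := by
        rw [hSt]
        exact le_add_of_nonneg_right (by positivity)

/-- For `z ∼ N(0, I_p)` with `p ≥ 2` and `Σ` positive semi-definite,
`E[(zᵀ Σ z)²/(zᵀ z)²] ≤ tr(Σ²)/p + (tr Σ)²/(p(p−1))`. -/
theorem gaussian_quadratic_ratio_sq_mean {p : ℕ} (hp : 2 ≤ p)
    (S : Matrix (Fin p) (Fin p) ℝ) (hS : S.PosSemidef) :
    ∫ x, (x ⬝ᵥ (S *ᵥ x)) ^ 2 / (x ⬝ᵥ x) ^ 2 ∂(stdGaussian p)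
      ≤ (S * S).trace / p + S.trace ^ 2 / ((p : ℝ) * ((p : ℝ) - 1)) :=
  gaussian_quadratic_ratio_sq_mean_general S hS
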